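/- arXiv:math/0307222 — 3 statements merged into one kernel-verified Lean document; each statement's English description precedes it below -/
import Mathlib

section
/- Let Δ be a quasi-tree with leaf order F_1,...,F_m, and label the vertices so that free vertices of later facets get larger labels (as in the paper's construction). If {i,j} is a non-edge of the 1-skeleton of Δ with i ≠ j, and k > i, k > j, then at least one of {i,k}, {j,k} is also a non-edge of the 1-skeleton of Δ. -/
/-- A facet `F` of the complex with facet set `Fs` is a leaf if either `F` is the only
facet, or there is a facet `G ≠ F` with `H ∩ F ⊆ G ∩ F` for every facet `H ≠ F`. -/
def IsLeaf {V : Type*} [DecidableEq V] (Fs : Finset (Finset V)) (F : Finset V) : Prop :=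
  F ∈ Fs ∧ (Fs = {F} ∨ ∃ G ∈ Fs, G ≠ F ∧ ∀ H ∈ Fs, H ≠ F → H ∩ F ⊆ G ∩ F)

/-- A leaf order of a list of facets `F_1, …, F_m`: each `F_i` is a leaf of
`⟨F_1, …, F_i⟩`. -/
def IsLeafOrder {V : Type*} [DecidableEq V] (L : List (Finset V)) : Prop :=
  ∀ i, i < L.length → IsLeaf ((L.take (i + 1)).toFinset) (L.getD i ∅)

/-- Adjacency in the 1-skeleton of the complex with facets `L`: two distinct vertices
joined by an edge iff they lie in a common facet. -/
def SkelAdj {n : ℕ} (L : List (Finset (Fin n))) (a b : Fin n) : Prop :=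
  a ≠ b ∧ ∃ F ∈ L, a ∈ F ∧ b ∈ F


lemma mem_take_toFinset {V : Type*} [DecidableEq V] (L : List (Finset V)) (s t : ℕ)
    (hts : t ≤ s) (hs : s < L.length) :
    L.getD t ∅ ∈ (L.take (s + 1)).toFinset := by
  have ht : t < L.length := lt_of_le_of_lt hts hs
  have ht' : t < (L.take (s+1)).length := by
    simp [List.length_take]; omega
  rw [List.mem_toFinset]
  have : (L.take (s+1))[t]'ht' = L[t]'ht := List.getElem_take ..
  rw [List.getD_eq_getElem _ _ ht, ← this]
  exact List.getElem_mem _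

lemma key {n : ℕ} (L : List (Finset (Fin n))) (hL : IsLeafOrder L)
    (step : Fin n → ℕ)
    (hstep : ∀ v : Fin n, step v < L.length ∧ v ∈ L.getD (step v) ∅ ∧
      ∀ i < step v, v ∉ L.getD i ∅)
    (v k : Fin n) (hvk : step v ≤ step k) :
    ∀ s, s < L.length → v ∈ L.getD s ∅ → k ∈ L.getD s ∅ →
      v ∈ L.getD (step k) ∅ := by
  intro s
  induction s using Nat.strong_induction_on with
  | _ s ih =>
    intro hs hv hk
    have hts : step k ≤ s := by
      by_contra h
      exact (hstep k).2.2 s (by omega) hk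
    by_cases heq : L.getD s ∅ = L.getD (step k) ∅
    · rwa [heq] at hv
    · obtain ⟨_, hcase⟩ := hL s hs
      have hmemt : L.getD (step k) ∅ ∈ (L.take (s+1)).toFinset :=
        mem_take_toFinset L s _ hts hs
      rcases hcase with hsingle | ⟨G, hG, hGne, hGmax⟩
      · rw [hsingle, Finset.mem_singleton] at hmemt
        exact absurd hmemt.symm heq
      · rw [List.mem_toFinset, List.mem_iff_getElem] at hG
        obtain ⟨c, hc, hGc⟩ := hG
        have hc' : c < L.length := by
          have := hc; simp [List.length_take] at this; omega
        have hGc' : G = L.getD c ∅ := by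
          rw [List.getD_eq_getElem _ _ hc', ← hGc]
          exact List.getElem_take ..
        have hcs : c ≠ s := by
          intro h; subst h
          exact hGne (by rw [hGc', List.getD_eq_getElem _ _ hc'])
        have hcs' : c < s := by
          have := hc; simp [List.length_take] at this; omega
        have hsub := hGmax (L.getD (step k) ∅) hmemt (fun h => heq h.symm)
        have hkG : k ∈ G := (Finset.mem_inter.mp
          (hsub (Finset.mem_inter.mpr ⟨(hstep k).2.1, hk⟩))).1
        have hvs : step v ≤ s := le_trans hvk hts
        have hvne : L.getD (step v) ∅ ≠ L.getD s ∅ := by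
          intro h
          have hk' : k ∈ L.getD (step v) ∅ := by rw [h]; exact hk
          have : ¬ step v < step k := fun hlt => (hstep k).2.2 _ hlt hk'
          have : step v = step k := by omega
          exact heq (by rw [← this, h])
        have hsubv := hGmax (L.getD (step v) ∅)
          (mem_take_toFinset L s _ hvs hs) hvne
        have hvG : v ∈ G := (Finset.mem_inter.mp
          (hsubv (Finset.mem_inter.mpr ⟨(hstep v).2.1, hv⟩))).1
        exact ih c hcs' hc' (hGc' ▸ hvG) (hGc' ▸ hkG)

/-- Let `Δ` be a quasi-tree with leaf order `F_1, …, F_m` on vertex set `{1,…,n}`,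
labeled as in the paper's construction (free vertices of later facets get larger
labels; equivalently, if `step v` is the first index of a facet containing `v`,
then `step` is monotone: vertices appearing later have larger labels).  If `{i,j}`
is a non-edge of the 1-skeleton with `i ≠ j` and `k > i`, `k > j`, then at least one
of `{i,k}`, `{j,k}` is also a non-edge of the 1-skeleton. -/
theorem quasiTree_labeling_nonedge (n : ℕ) (L : List (Finset (Fin n)))
    (hL : IsLeafOrder L)
    (step : Fin n → ℕ)
    (hstep : ∀ v : Fin n, step v < L.length ∧ v ∈ L.getD (step v) ∅ ∧
      ∀ i < step v, v ∉ L.getD i ∅)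
    (hmono : ∀ u v : Fin n, step u < step v → u < v)
    (i j k : Fin n) (hij : i ≠ j) (hnadj : ¬ SkelAdj L i j)
    (hik : i < k) (hjk : j < k) :
    ¬ SkelAdj L i k ∨ ¬ SkelAdj L j k := by
  by_contra h
  push_neg at h
  obtain ⟨⟨_, F, hF, hiF, hkF⟩, ⟨_, G, hG, hjG, hkG⟩⟩ := h
  have hik' : step i ≤ step k := by
    by_contra h'; exact absurd (hmono k i (by omega)) (by simp [not_lt.mpr hik.le])
  have hjk' : step j ≤ step k := by
    by_contra h'; exact absurd (hmono k j (by omega)) (by simp [not_lt.mpr hjk.le])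
  obtain ⟨a, ha, hFa⟩ := List.mem_iff_getElem.mp hF
  obtain ⟨b, hb, hGb⟩ := List.mem_iff_getElem.mp hG
  have hFa' : F = L.getD a ∅ := by rw [List.getD_eq_getElem _ _ ha, hFa]
  have hGb' : G = L.getD b ∅ := by rw [List.getD_eq_getElem _ _ hb, hGb]
  have hi := key L hL step hstep i k hik' a ha (hFa' ▸ hiF) (hFa' ▸ hkF)
  have hj := key L hL step hstep j k hjk' b hb (hGb' ▸ hjG) (hGb' ▸ hkG)
  exact hnadj ⟨hij, L.getD (step k) ∅, by
    rw [List.getD_eq_getElem _ _ (hstep k).1]; exact List.getElem_mem _, hi, hj⟩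
end

section
/- Let Δ be a quasi-tree with leaf order F_1,...,F_m on vertex set V, and let vertices be labeled as in the previous construction. For a vertex k, let r be minimal such that ⟨F_1,...,F_r⟩ contains all vertices with labels 1,...,k. Then k is a free vertex of F_r in ⟨F_1,...,F_r⟩. -/
/-- Let `Δ` be a quasi-tree with leaf order `F_1, …, F_m` (indexed from 0 here) on
vertex set `{1,…,n}`, labeled as in the paper's construction (if `step v` is the
first index of a facet containing `v`, then vertices with larger `step` have larger
labels).  For a vertex `k`, let `r` be minimal such that `⟨F_1, …, F_r⟩` contains all
vertices with labels `≤ k`.  Then `k` is a free vertex of `F_r` in `⟨F_1, …, F_r⟩`: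
it belongs to `F_r` and to no other facet among `F_1, …, F_r`. -/
theorem quasiTree_labeling_free_vertex (n : ℕ) (L : List (Finset (Fin n)))
    (hL : IsLeafOrder L)
    (step : Fin n → ℕ)
    (hstep : ∀ v : Fin n, step v < L.length ∧ v ∈ L.getD (step v) ∅ ∧
      ∀ i < step v, v ∉ L.getD i ∅)
    (hmono : ∀ u v : Fin n, step u < step v → u < v)
    (k : Fin n) (r : ℕ) (hr : r < L.length)
    (hcov : ∀ v : Fin n, v ≤ k → ∃ i ≤ r, v ∈ L.getD i ∅)
    (hmin : ∀ r' < r, ∃ v : Fin n, v ≤ k ∧ ∀ i ≤ r', v ∉ L.getD i ∅) :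
    k ∈ L.getD r ∅ ∧ ∀ i ≤ r, i ≠ r → k ∉ L.getD i ∅ := by
  obtain ⟨hsk_lt, hsk_mem, hsk_not⟩ := hstep k
  have h1 : step k ≤ r := by
    obtain ⟨i, hi, hki⟩ := hcov k le_rfl
    by_contra h
    push_neg at h
    exact hsk_not i (lt_of_le_of_lt hi h) hki
  have h2 : r ≤ step k := by
    by_contra h
    push_neg at h
    obtain ⟨v, hv, hnot⟩ := hmin (step k) h
    have hsv : step v ≤ step k := by
      by_contra h'
      push_neg at h'
      exact absurd (hmono k v h') (not_lt.2 hv)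
    exact hnot (step v) hsv (hstep v).2.1
  have hsk : step k = r := le_antisymm h1 h2
  constructor
  · rw [← hsk]; exact hsk_mem
  · intro i hi hne
    exact hsk_not i (by omega)
end

section
/- Let I be a monomial ideal in K[x_1,...,x_n] generated in degree 2 satisfying: (*) if x_i x_j ∈ I with i ≠ j and k > i, k > j, then x_i x_k ∈ I or x_j x_k ∈ I; and (**) if x_i^2 ∈ I and j > i and there is k with x_k x_j ∈ I, then x_i x_j ∈ I or x_i x_k ∈ I. Then the minimal monomial generators of I can be linearly ordered so that for all generators u > v there exists a generator w > v such that w/gcd(w,v) has degree 1 and divides u/gcd(u,v). -/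
def mgen {n : ℕ} (i j : Fin n) : Fin n → ℕ :=
  fun t => (if t = i then 1 else 0) + (if t = j then 1 else 0)

lemma mgen_comm {n : ℕ} (i j : Fin n) : mgen i j = mgen j i :=
  funext fun _ => Nat.add_comm _ _

lemma mgen_inj {n : ℕ} {i j i' j' : Fin n} (hji : j ≤ i) (hj'i' : j' ≤ i')
    (h : mgen i j = mgen i' j') : i = i' ∧ j = j' := by
  have hi := congrFun h i
  have hi' := congrFun h i'
  have hj := congrFun h j
  simp only [mgen] at hi hi' hj
  have hii' : i = i' := by
    by_contra hne
    have h1 : i = j' := by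
      by_contra h2
      simp only [if_pos rfl, if_neg hne, if_neg h2] at hi
      split_ifs at hi <;> omega
    have h2 : i' = j := by
      by_contra h3
      have hne' : ¬ i' = i := fun e => hne e.symm
      simp only [if_pos rfl, if_neg hne', if_neg h3] at hi'
      split_ifs at hi' <;> omega
    exact hne (le_antisymm (by rw [h1]; exact hj'i') (by rw [h2]; exact hji))
  subst hii'
  refine ⟨rfl, ?_⟩
  by_contra hne
  simp only [if_pos rfl, if_neg hne] at hj
  split_ifs at hj <;> omega

lemma exists_rep {n : ℕ} {u : Fin n → ℕ} (h : ∑ t, u t = 2) :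
    ∃ i j : Fin n, j ≤ i ∧ u = mgen i j := by
  classical
  obtain ⟨i, hi⟩ : ∃ i, u i ≠ 0 := by
    by_contra hc; push_neg at hc
    rw [Finset.sum_congr rfl fun t _ => hc t] at h
    simp at h
  have hsum : u i + ∑ t ∈ Finset.univ.erase i, u t = 2 := by
    rw [Finset.add_sum_erase _ u (Finset.mem_univ i)]; exact h
  by_cases h2 : u i = 2
  · refine ⟨i, i, le_refl i, funext fun t => ?_⟩
    by_cases hti : t = i
    · rw [hti]; simp [mgen, h2]
    · have h0 : ∑ t ∈ Finset.univ.erase i, u t = 0 := by omega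
      have := (Finset.sum_eq_zero_iff).mp h0 t (by simp [hti])
      simp [mgen, hti, this]
  · have h1 : u i = 1 := by omega
    have hrest : ∑ t ∈ Finset.univ.erase i, u t = 1 := by omega
    obtain ⟨j, hjmem, hjne⟩ : ∃ j ∈ Finset.univ.erase i, u j ≠ 0 := by
      by_contra hc; push_neg at hc
      rw [Finset.sum_eq_zero hc] at hrest; omega
    have hji : j ≠ i := (Finset.mem_erase.mp hjmem).1
    have hj1 : u j = 1 := by
      have hle : u j ≤ 1 := hrest ▸ Finset.single_le_sum (fun _ _ => Nat.zero_le _) hjmem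
      omega
    have hz : ∀ t, t ≠ i → t ≠ j → u t = 0 := by
      intro t hti htj
      have hsum2 : u j + ∑ t ∈ (Finset.univ.erase i).erase j, u t
          = ∑ t ∈ Finset.univ.erase i, u t := Finset.add_sum_erase _ u hjmem
      have h0 : ∑ t ∈ (Finset.univ.erase i).erase j, u t = 0 := by omega
      exact (Finset.sum_eq_zero_iff).mp h0 t (by simp [hti, htj])
    have huf : u = mgen i j := funext fun t => by
      by_cases hti : t = i
      · rw [hti]
        have hij : ¬ i = j := fun e => hji e.symm
        simp [mgen, h1, hij]
      · by_cases htj : t = j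
        · rw [htj]; simp [mgen, hj1, hji]
        · simp [mgen, hti, htj, hz t hti htj]
    rcases le_total j i with hle | hle
    · exact ⟨i, j, hle, huf⟩
    · exact ⟨j, i, hle, by rw [huf, mgen_comm]⟩

def qrank (n : ℕ) (i j : Fin n) : ℕ :=
  i.val * (n + 2) + (if j = i then 0 else j.val + 1)

lemma qrank_lt {n : ℕ} {i i' : Fin n} (j j' : Fin n) (h : i < i') :
    qrank n i j < qrank n i' j' := by
  have hj : (if j = i then 0 else j.val + 1) < n + 2 := by
    have := j.isLt; split_ifs <;> omega
  have step : i.val * (n + 2) + (n + 2) ≤ i'.val * (n + 2) := by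
    have hle : i.val + 1 ≤ i'.val := h
    calc i.val * (n + 2) + (n + 2) = (i.val + 1) * (n + 2) := by ring
    _ ≤ i'.val * (n + 2) := Nat.mul_le_mul_right _ hle
  unfold qrank
  have h0 : 0 ≤ (if j' = i' then 0 else j'.val + 1) := Nat.zero_le _
  linarith

lemma qrank_sq_lt {n : ℕ} {i j : Fin n} (h : ¬ j = i) :
    qrank n i i < qrank n i j := by
  unfold qrank
  rw [if_pos rfl, if_neg h]
  exact Nat.add_lt_add_left (Nat.succ_pos _) _

lemma qrank_inj {n : ℕ} {i j i' j' : Fin n} (h : qrank n i j = qrank n i' j') :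
    i = i' ∧ j = j' := by
  have hii : i = i' := by
    rcases lt_trichotomy i i' with hlt | he | hlt
    · exact absurd h (Nat.ne_of_lt (qrank_lt j j' hlt))
    · exact he
    · exact absurd h.symm (Nat.ne_of_lt (qrank_lt j' j hlt))
  subst hii
  refine ⟨rfl, ?_⟩
  unfold qrank at h
  have hm := Nat.add_left_cancel h
  have hjv : j.val = j'.val := by
    by_cases ha : j = i <;> by_cases hb : j' = i
    · rw [ha, hb]
    · rw [if_pos ha, if_neg hb] at hm; omega
    · rw [if_neg ha, if_pos hb] at hm; omega
    · rw [if_neg ha, if_neg hb] at hm; omega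
  exact Fin.ext hjv

lemma sum_quot {n : ℕ} (p q c d : Fin n) (hpc : p ≠ c) (hpd : p ≠ d)
    (hq : q = c ∨ q = d) (hpq : p ≠ q) :
    ∑ t, (mgen p q t - min (mgen p q t) (mgen c d t)) = 1 := by
  rw [Finset.sum_eq_single_of_mem p (Finset.mem_univ p)]
  · simp [mgen, hpq, hpc, hpd]
  · intro t _ htp
    have hw : mgen p q t = if t = q then 1 else 0 := by simp [mgen, htp]
    by_cases htq : t = q
    · have hvq : 1 ≤ mgen c d t := by
        rw [htq]; rcases hq with h | h <;> simp [mgen, h]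
      rw [hw, if_pos htq]
      omega
    · rw [hw, if_neg htq]
      omega

lemma pt_quot {n : ℕ} (p q c d a b : Fin n) (hpq : p ≠ q) (hq : q = c ∨ q = d)
    (hp : p = a ∨ p = b)
    (hdisj : ∀ t, min (mgen a b t) (mgen c d t) = 0) :
    ∀ t, mgen p q t - min (mgen p q t) (mgen c d t) ≤
      mgen a b t - min (mgen a b t) (mgen c d t) := by
  intro t
  rw [hdisj t, Nat.sub_zero]
  by_cases htp : t = p
  · have h1 : 1 ≤ mgen a b t := by
      rw [htp]; rcases hp with h | h <;> simp [mgen, h]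
    have h2 : mgen p q t = 1 := by rw [htp]; simp [mgen, hpq]
    omega
  · have hw : mgen p q t = if t = q then 1 else 0 := by simp [mgen, htp]
    by_cases htq : t = q
    · have hvq : 1 ≤ mgen c d t := by
        rw [htq]; rcases hq with h | h <;> simp [mgen, h]
      rw [hw, if_pos htq]
      omega
    · rw [hw, if_neg htq]
      omega

/-- Let `I` be a monomial ideal generated in degree 2, with minimal monomial
generating set `A` (given as a finite set of exponent vectors of degree 2),
satisfying:
`(*)` if `x_i x_j ∈ I` with `i ≠ j` and `k > i`, `k > j`, then `x_i x_k ∈ I` or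
`x_j x_k ∈ I`; and
`(**)` if `x_i² ∈ I`, `j > i`, and there is `k` with `x_k x_j ∈ I`, then
`x_i x_j ∈ I` or `x_i x_k ∈ I`.
Then the generators can be linearly ordered (via an injective rank function `f`)
so that for all generators `u > v` there is a generator `w > v` such that
`w / gcd(w,v)` has degree 1 and divides `u / gcd(u,v)`. -/
theorem exists_linear_quotient_order (n : ℕ) (A : Finset (Fin n → ℕ))
    (hdeg : ∀ u ∈ A, ∑ t, u t = 2)
    (hstar : ∀ i j k : Fin n, i ≠ j → mgen i j ∈ A → i < k → j < k →
      mgen i k ∈ A ∨ mgen j k ∈ A)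
    (hdstar : ∀ i j k : Fin n, mgen i i ∈ A → i < j → mgen k j ∈ A →
      mgen i j ∈ A ∨ mgen i k ∈ A) :
    ∃ f : (Fin n → ℕ) → ℕ, Set.InjOn f ↑A ∧
      ∀ u ∈ A, ∀ v ∈ A, f v < f u →
        ∃ w ∈ A, f v < f w ∧
          (∑ t, (w t - min (w t) (v t))) = 1 ∧
          (∀ t, w t - min (w t) (v t) ≤ u t - min (u t) (v t)) := by
  classical
  let P : (Fin n → ℕ) → Prop := fun u => ∃ p : Fin n × Fin n, p.2 ≤ p.1 ∧ u = mgen p.1 p.2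
  let f : (Fin n → ℕ) → ℕ := fun u =>
    if h : P u then qrank n h.choose.1 h.choose.2 else 0
  have hf : ∀ (i j : Fin n), j ≤ i → f (mgen i j) = qrank n i j := by
    intro i j hji
    have hP : P (mgen i j) := ⟨(i, j), hji, rfl⟩
    have hspec := hP.choose_spec
    obtain ⟨e1, e2⟩ := mgen_inj hspec.1 hji hspec.2.symm
    show (if h : P (mgen i j) then qrank n h.choose.1 h.choose.2 else 0) = qrank n i j
    rw [dif_pos hP, e1, e2]
  have hrepA : ∀ u ∈ A, ∃ i j : Fin n, j ≤ i ∧ u = mgen i j :=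
    fun u hu => exists_rep (hdeg u hu)
  refine ⟨f, ?_, ?_⟩
  · intro u hu v hv huv
    obtain ⟨a, b, hba, hu'⟩ := hrepA u hu
    obtain ⟨c, d, hdc, hv'⟩ := hrepA v hv
    rw [hu', hv', hf a b hba, hf c d hdc] at huv
    obtain ⟨e1, e2⟩ := qrank_inj huv
    rw [hu', hv', e1, e2]
  · intro u hu v hv hlt
    obtain ⟨a, b, hba, hu'⟩ := hrepA u hu
    obtain ⟨c, d, hdc, hv'⟩ := hrepA v hv
    have hdu := hdeg u hu
    by_cases hS1 : ∑ t, (u t - min (u t) (v t)) = 1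
    · exact ⟨u, hu, hlt, hS1, fun t => le_refl _⟩
    by_cases hS0 : ∑ t, (u t - min (u t) (v t)) = 0
    · exfalso
      have hup : ∀ t, u t ≤ v t := by
        intro t
        have := Finset.sum_eq_zero_iff.mp hS0 t (Finset.mem_univ t)
        omega
      have huv : u = v := by
        by_contra hne
        have hex : ∃ t, u t ≠ v t := by
          by_contra hc; push_neg at hc; exact hne (funext hc)
        obtain ⟨t0, ht0⟩ := hex
        have hlt2 : ∑ t, u t < ∑ t, v t :=
          Finset.sum_lt_sum (fun t _ => hup t)
            ⟨t0, Finset.mem_univ t0, lt_of_le_of_ne (hup t0) ht0⟩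
        have hdv := hdeg v hv
        omega
      rw [huv] at hlt; exact lt_irrefl _ hlt
    have hSle : ∑ t, (u t - min (u t) (v t)) ≤ 2 := by
      calc ∑ t, (u t - min (u t) (v t)) ≤ ∑ t, u t :=
            Finset.sum_le_sum (fun t _ => Nat.sub_le _ _)
        _ = 2 := hdu
    have hS2 : ∑ t, (u t - min (u t) (v t)) = 2 := by omega
    have hdisj : ∀ t, min (u t) (v t) = 0 := by
      have hsplit : ∑ t, ((u t - min (u t) (v t)) + min (u t) (v t)) = ∑ t, u t := by
        apply Finset.sum_congr rfl; intro t _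
        have : min (u t) (v t) ≤ u t := min_le_left _ _
        omega
      rw [Finset.sum_add_distrib, hS2, hdu] at hsplit
      have hz : ∑ t, min (u t) (v t) = 0 := by omega
      intro t
      exact Finset.sum_eq_zero_iff.mp hz t (Finset.mem_univ t)
    subst hu'; subst hv'
    have hvc : (1 : ℕ) ≤ mgen c d c := by simp [mgen]
    have hva : mgen c d a = 0 := by
      have h1 : (1 : ℕ) ≤ mgen a b a := by simp [mgen]
      have := hdisj a; omega
    have hac : a ≠ c := by
      intro e; rw [e] at hva; omega
    have huc : mgen a b c = 0 := by
      have := hdisj c; omega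
    have hbc : b ≠ c := by
      intro e
      have h1 : (1 : ℕ) ≤ mgen a b c := by rw [← e]; simp [mgen]
      omega
    rw [hf a b hba, hf c d hdc] at hlt
    have hca : c < a := by
      rcases lt_trichotomy a c with hlt2 | he | hlt2
      · have := qrank_lt b d hlt2; omega
      · exact absurd he hac
      · exact hlt2
    have hda : d < a := lt_of_le_of_lt hdc hca
    by_cases hsq : d = c
    · subst hsq
      have hu_mem : mgen b a ∈ A := by rw [mgen_comm]; exact hu
      rcases hdstar d a b hv hca hu_mem with hw | hw
      · refine ⟨mgen d a, hw, ?_, ?_, ?_⟩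
        · rw [hf d d hdc, mgen_comm d a, hf a d (le_of_lt hca)]
          exact qrank_lt _ _ hca
        · rw [mgen_comm d a]; exact sum_quot a d d d hac hac (Or.inl rfl) hac
        · rw [mgen_comm d a]; exact pt_quot a d d d a b hac (Or.inl rfl) (Or.inl rfl) hdisj
      · refine ⟨mgen d b, hw, ?_, ?_, ?_⟩
        · rw [hf d d hdc]
          rcases lt_trichotomy b d with h | h | h
          · rw [hf d b (le_of_lt h)]
            exact qrank_sq_lt hbc
          · exact absurd h hbc
          · rw [mgen_comm d b, hf b d (le_of_lt h)]
            exact qrank_lt _ _ h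
        · rw [mgen_comm d b]; exact sum_quot b d d d hbc hbc (Or.inl rfl) hbc
        · rw [mgen_comm d b]; exact pt_quot b d d d a b hbc (Or.inl rfl) (Or.inr rfl) hdisj
    · have hcd : c ≠ d := fun e => hsq e.symm
      have had : a ≠ d := by
        intro e
        have h1 : (1 : ℕ) ≤ mgen c d d := by simp [mgen]
        rw [e] at hva; omega
      rcases hstar c d a hcd hv hca hda with hw | hw
      · refine ⟨mgen c a, hw, ?_, ?_, ?_⟩
        · rw [hf c d hdc, mgen_comm c a, hf a c (le_of_lt hca)]
          exact qrank_lt _ _ hca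
        · rw [mgen_comm c a]; exact sum_quot a c c d hac had (Or.inl rfl) hac
        · rw [mgen_comm c a]; exact pt_quot a c c d a b hac (Or.inl rfl) (Or.inl rfl) hdisj
      · refine ⟨mgen d a, hw, ?_, ?_, ?_⟩
        · rw [hf c d hdc, mgen_comm d a, hf a d (le_of_lt hda)]
          exact qrank_lt _ _ hca
        · rw [mgen_comm d a]; exact sum_quot a d c d hac had (Or.inr rfl) had
        · rw [mgen_comm d a]; exact pt_quot a d c d a b had (Or.inr rfl) (Or.inl rfl) hdisj
end
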